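/- arXiv:0807.3727 — 2 statements merged into one kernel-verified Lean document; each statement's English description precedes it below -/
import Mathlib

section
/- Let G be a group, H a subgroup, and let M ≤ G be the intersection of all conjugates gLg⁻¹ of a finite-index subgroup L of G. If A is a subgroup such that g⁻¹Ag ∩ L = n(g⁻¹Ag) for every g ∈ G (where nK denotes the subgroup generated by n-th powers of elements of K for an abelian subgroup K), and A is abelian, then M is a finite-index normal subgroup of G with A ∩ M = nA. -/
/-!
`M` is the normal core of `L`, so it is normal of finite index. Since taking `n`-th powers
commutes with conjugation, `n`-characteristicity at every conjugate of `A` puts every conjugate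
of `nA` inside `L`, hence `nA` inside the core; conversely `A ∩ core ≤ A ∩ L = nA`.
-/

/-- For an (abelian) subgroup `A` of `G`, the subgroup generated by `n`-th powers of
elements of `A`. -/
def powSubgroup {G : Type*} [Group G] (n : ℕ) (A : Subgroup G) : Subgroup G :=
  Subgroup.closure {x : G | ∃ a ∈ A, x = a ^ n}

/-- The conjugate subgroup `g⁻¹ A g`. -/
def conjSubgroup {G : Type*} [Group G] (g : G) (A : Subgroup G) : Subgroup G :=
  A.map (MulAut.conj g⁻¹).toMonoidHom

namespace Subgroup

variable {G : Type*} [Group G]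

theorem coe_normalCore_eq_iInter_image_conj (H : Subgroup G) :
    (H.normalCore : Set G) = ⋂ g : G, (fun x => g * x * g⁻¹) '' (H : Set G) := by
  rw [normalCore_eq_iInf_map_conj, coe_iInf]
  rfl

theorem le_normalCore_iff_forall_conjSubgroup_le {H K : Subgroup G} :
    K ≤ H.normalCore ↔ ∀ g : G, conjSubgroup g K ≤ H := by
  rw [normalCore_eq_iInf_comap_conj, le_iInf_iff]
  refine ⟨fun h g => map_le_iff_le_comap.2 (h g⁻¹), fun h g => ?_⟩
  simpa [conjSubgroup] using map_le_iff_le_comap.1 (h g⁻¹)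

end Subgroup

section powSubgroup

variable {G N : Type*} [Group G] [Group N]

theorem powSubgroup_le (n : ℕ) (A : Subgroup G) : powSubgroup n A ≤ A :=
  Subgroup.closure_le _ |>.2 fun _ ⟨_, ha, hx⟩ => hx ▸ A.pow_mem ha n

theorem powSubgroup_map (n : ℕ) (A : Subgroup G) (f : G →* N) :
    powSubgroup n (A.map f) = (powSubgroup n A).map f := by
  rw [powSubgroup, powSubgroup, MonoidHom.map_closure]
  congr 1
  ext x
  simp [eq_comm]

theorem conjSubgroup_one (A : Subgroup G) : conjSubgroup 1 A = A := by
  ext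
  simp [conjSubgroup]

theorem conjSubgroup_powSubgroup (g : G) (n : ℕ) (A : Subgroup G) :
    conjSubgroup g (powSubgroup n A) = powSubgroup n (conjSubgroup g A) :=
  (powSubgroup_map n A _).symm

theorem inf_normalCore_eq_powSubgroup {L A : Subgroup G} {n : ℕ}
    (hchar : ∀ g : G, conjSubgroup g A ⊓ L = powSubgroup n (conjSubgroup g A)) :
    A ⊓ L.normalCore = powSubgroup n A := by
  refine le_antisymm ?_ (le_inf (powSubgroup_le n A) ?_)
  · calc A ⊓ L.normalCore ≤ conjSubgroup 1 A ⊓ L := by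
          rw [conjSubgroup_one]; exact inf_le_inf_left A L.normalCore_le
      _ = powSubgroup n A := by rw [hchar, conjSubgroup_one]
  · refine Subgroup.le_normalCore_iff_forall_conjSubgroup_le.2 fun g => ?_
    rw [conjSubgroup_powSubgroup, ← hchar]
    exact inf_le_right

end powSubgroup

theorem core_is_n_characteristic_general {G : Type*} [Group G] (L M A : Subgroup G) (n : ℕ)
    (hL : L.FiniteIndex)
    (hM : (M : Set G) = ⋂ g : G, (fun x => g * x * g⁻¹) '' (L : Set G))
    (hchar : ∀ g : G, conjSubgroup g A ⊓ L = powSubgroup n (conjSubgroup g A)) :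
    M.Normal ∧ M.FiniteIndex ∧ A ⊓ M = powSubgroup n A := by
  obtain rfl : M = L.normalCore :=
    SetLike.coe_injective (hM.trans (L.coe_normalCore_eq_iInter_image_conj).symm)
  exact ⟨inferInstance, inferInstance, inf_normalCore_eq_powSubgroup hchar⟩

/-- The normal core of an `n`-characteristic finite-index subgroup is a normal,
finite-index, `n`-characteristic subgroup. -/
theorem core_is_n_characteristic {G : Type*} [Group G] (L M A : Subgroup G) (n : ℕ)
    (hn : 0 < n) (hL : L.FiniteIndex)
    (hM : (M : Set G) = ⋂ g : G, (fun x => g * x * g⁻¹) '' (L : Set G))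
    (hab : ∀ a ∈ A, ∀ b ∈ A, a * b = b * a)
    (hchar : ∀ g : G, conjSubgroup g A ⊓ L = powSubgroup n (conjSubgroup g A)) :
    M.Normal ∧ M.FiniteIndex ∧ A ⊓ M = powSubgroup n A :=
  core_is_n_characteristic_general L M A n hL hM hchar
end

section
/- Let G be a group acting on a tree T, and suppose a ∈ G is hyperbolic (fixes no vertex). Then there is a unique minimal ⟨a⟩-invariant subtree T_a of T, the vertices of T_a are exactly the vertices v minimizing the distance d(v, a·v), and a acts on T_a as a translation of amplitude m = min_v d(v, a·v). -/
/-!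
Along the geodesic from a minimizer `v₀` of the displacement `v ↦ d(v, a • v)` to `a • v₀`
the displacement cannot grow, so the component `C` of `v₀` in the minimal set `S` is an
`⟨a⟩`-invariant subtree. If `L` is a convex `⟨a⟩`-invariant set and `y` is the point of `L`
nearest to `w`, then `a • y` is the point nearest to `a • w`; when `a • y ≠ y`, the geodesic
`[w, a • w]` in the tree runs through `[w, y]`, `[y, a • y]` and `[a • y, a • w]`, so
`d(w, a • w) = 2 d(w, y) + d(y, a • y)`. For `L ⊆ S` this gives `S ⊆ L`: with `L = C` it
shows that `S = C` is connected, and with `L = S ∩ S'` it shows `S ⊆ S'`.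
-/

open Set

namespace SimpleGraph

variable {V : Type*} {G : SimpleGraph V} {s L : Set V} {u v w w' x y y' z : V} {m : ℕ}

lemma Walk.dist_add_dist_of_length_eq_dist {p : G.Walk u v} (hp : p.length = G.dist u v)
    (hx : x ∈ p.support) : G.dist u x + G.dist x v = G.dist u v := by
  classical
  have h₁ := dist_le (p.takeUntil x hx)
  have h₂ := dist_le (p.dropUntil x hx)
  have hsplit := congrArg Walk.length (p.take_spec hx)
  rw [Walk.length_append] at hsplit
  have := (p.takeUntil x hx).reachable.dist_triangle_left v
  omega

lemma Iso.dist_apply {V' : Type*} {G' : SimpleGraph V'} (φ : G ≃g G') (u v : V) :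
    G'.dist (φ u) (φ v) = G.dist u v := by
  by_cases h : G.Reachable u v
  · obtain ⟨p, hp⟩ := h.exists_walk_length_eq_dist
    obtain ⟨q, hq⟩ :=
      (Iso.reachable_iff.mpr h : G'.Reachable (φ u) (φ v)).exists_walk_length_eq_dist
    have h₁ := dist_le (p.map φ.toHom)
    have h₂ :=
      dist_le ((q.map φ.symm.toHom).copy (φ.symm_apply_apply u) (φ.symm_apply_apply v))
    simp only [Walk.length_copy, Walk.length_map] at h₁ h₂
    exact le_antisymm (hp ▸ h₁) (hq ▸ h₂)
  · rw [dist_eq_zero_of_not_reachable h,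
      dist_eq_zero_of_not_reachable (mt Iso.reachable_iff.mp h)]

def IsConvex (G : SimpleGraph V) (s : Set V) : Prop :=
  ∀ ⦃x⦄, x ∈ s → ∀ ⦃y⦄, y ∈ s → ∀ ⦃z⦄, G.dist x z + G.dist z y = G.dist x y → z ∈ s

lemma IsConvex.inter {t : Set V} (hs : G.IsConvex s) (ht : G.IsConvex t) :
    G.IsConvex (s ∩ t) :=
  fun _ hx _ hy _ hz => ⟨hs hx.1 hy.1 hz, ht hx.2 hy.2 hz⟩

def IsProjection (G : SimpleGraph V) (s : Set V) (w y : V) : Prop :=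
  y ∈ s ∧ ∀ z ∈ s, G.dist w y ≤ G.dist w z

lemma exists_isProjection (hs : s.Nonempty) (w : V) : ∃ y, G.IsProjection s w y :=
  ⟨Function.argminOn (G.dist w) s hs, Function.argminOn_mem _ _ _,
    fun _ hz => Function.argminOn_le _ _ hz⟩

lemma IsProjection.map (φ : G ≃g G) (hφ : MapsTo φ s s) (hφ' : MapsTo φ.symm s s)
    (h : G.IsProjection s w y) : G.IsProjection s (φ w) (φ y) := by
  refine ⟨hφ h.1, fun z hz => ?_⟩
  have := h.2 _ (hφ' hz)
  rwa [← φ.dist_apply w, ← φ.dist_apply w, φ.apply_symm_apply] at this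

lemma dist_apply_le_of_dist_add_dist (hG : G.Connected) (φ : G ≃g G)
    (hz : G.dist v z + G.dist z (φ v) = G.dist v (φ v)) :
    G.dist z (φ z) ≤ G.dist v (φ v) := by
  have := hG.dist_triangle (u := z) (v := φ v) (w := φ z)
  have := φ.dist_apply v z
  omega

lemma exists_connected_subset_mapsTo (φ : G ≃g G) (hφ : MapsTo φ s s)
    (hφ' : MapsTo φ.symm s s) {v₀ : V} (p : G.Walk v₀ (φ v₀))
    (hp : ∀ z ∈ p.support, z ∈ s) :
    ∃ C ⊆ s, v₀ ∈ C ∧ (G.induce C).Connected ∧ MapsTo φ C C ∧ MapsTo φ.symm C C := by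
  classical
  set C := {x | ∃ q : G.Walk v₀ x, ∀ z ∈ q.support, z ∈ s}
  have hprefix {x} (q : G.Walk v₀ x) (hq : ∀ z ∈ q.support, z ∈ s) :
      ∀ z ∈ q.support, z ∈ C :=
    fun z hz =>
      ⟨q.takeUntil z hz, fun t ht => hq t (q.support_takeUntil_subset_support hz ht)⟩
  have hmap (ψ : G ≃g G) (hψ : MapsTo ψ s s) {x y} (q : G.Walk x y)
      (hq : ∀ z ∈ q.support, z ∈ s) : ∀ z ∈ (q.map ψ.toHom).support, z ∈ s := by
    intro z hz
    obtain ⟨t, ht, rfl⟩ := List.mem_map.mp (Walk.support_map _ q ▸ hz)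
    exact hψ (hq t ht)
  have hv₀ : v₀ ∈ C := ⟨.nil, by simpa using hp v₀ p.start_mem_support⟩
  refine ⟨C, fun x ⟨q, hq⟩ => hq x q.end_mem_support, hv₀, ?_, ?_, ?_⟩
  · exact induce_connected_of_patches v₀ hv₀ fun {x} ⟨q, hq⟩ =>
      ⟨_, hprefix q hq, q.start_mem_support, q.end_mem_support, q.connected_induce_support _ _⟩
  · rintro x ⟨q, hq⟩
    refine ⟨p.append (q.map φ.toHom), fun z hz => ?_⟩
    rcases (Walk.mem_support_append_iff _ _).mp hz with hz | hz
    exacts [hp z hz, hmap φ hφ q hq z hz]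
  · rintro x ⟨q, hq⟩
    let p' : G.Walk v₀ (φ.symm v₀) :=
      ((p.map φ.symm.toHom).reverse).copy (φ.symm_apply_apply v₀) rfl
    refine ⟨p'.append (q.map φ.symm.toHom), fun z hz => ?_⟩
    rcases (Walk.mem_support_append_iff _ _).mp hz with hz | hz
    · simp only [p', Walk.support_copy, Walk.support_reverse, List.mem_reverse] at hz
      exact hmap φ.symm hφ' p hp z hz
    · exact hmap φ.symm hφ' q hq z hz

namespace IsTree

lemma length_eq_dist_of_isPath (hG : G.IsTree) {p : G.Walk u v} (hp : p.IsPath) :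
    p.length = G.dist u v := by
  obtain ⟨q, hq, hlen⟩ := hG.connected.exists_path_of_dist u v
  rw [(hG.existsUnique_path u v).unique hp hq, hlen]

lemma dist_add_dist_of_mem_support (hG : G.IsTree) {p : G.Walk u v} (hp : p.IsPath)
    (hx : x ∈ p.support) :
    G.dist u x + G.dist x v = G.dist u v :=
  p.dist_add_dist_of_length_eq_dist (hG.length_eq_dist_of_isPath hp) hx

lemma mem_support_of_dist_add_dist (hG : G.IsTree) {p : G.Walk u v} (hp : p.IsPath)
    (hx : G.dist u x + G.dist x v = G.dist u v) : x ∈ p.support := by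
  obtain ⟨q₁, hq₁⟩ := hG.connected.exists_walk_length_eq_dist u x
  obtain ⟨q₂, hq₂⟩ := hG.connected.exists_walk_length_eq_dist x v
  have hq : (q₁.append q₂).IsPath :=
    (q₁.append q₂).isPath_of_length_eq_dist (by rw [Walk.length_append, hq₁, hq₂, hx])
  rw [(hG.existsUnique_path u v).unique hp hq]
  exact (Walk.mem_support_append_iff _ _).mpr (Or.inl q₁.end_mem_support)

/-- Geodesics `[u, v]` and `[v, w]` meeting only in `v` concatenate to a geodesic. -/
lemma dist_add_dist_of_forall_eq (hG : G.IsTree)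
    (h : ∀ x, G.dist u x + G.dist x v = G.dist u v → G.dist v x + G.dist x w = G.dist v w →
      x = v) :
    G.dist u v + G.dist v w = G.dist u w := by
  obtain ⟨p, hp, hpl⟩ := hG.connected.exists_path_of_dist u v
  obtain ⟨q, hq, hql⟩ := hG.connected.exists_path_of_dist v w
  have hpq : (p.append q).IsPath := by
    rw [Walk.isPath_def, Walk.support_append, List.nodup_append]
    refine ⟨hp.support_nodup, hq.support_nodup.sublist q.support.tail_sublist, ?_⟩
    rintro x hxp _ hxq rfl
    have hxv := h x (hG.dist_add_dist_of_mem_support hp hxp)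
      (hG.dist_add_dist_of_mem_support hq (List.mem_of_mem_tail hxq))
    subst hxv
    have := hq.support_nodup
    rw [← q.cons_tail_support] at this
    exact (List.nodup_cons.mp this).1 hxq
  rw [← hpl, ← hql, ← Walk.length_append, hG.length_eq_dist_of_isPath hpq]

lemma dist_add_dist_of_le (hG : G.IsTree) (hx : G.dist u x + G.dist x v = G.dist u v)
    (hy : G.dist u y + G.dist y v = G.dist u v) (hxy : G.dist u x ≤ G.dist u y) :
    G.dist u x + G.dist x y = G.dist u y := by
  classical
  obtain ⟨p, hp, -⟩ := hG.connected.exists_path_of_dist u v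
  have hyp := hG.mem_support_of_dist_add_dist hp hy
  have hxp := hG.mem_support_of_dist_add_dist hp hx
  rw [← p.take_spec hyp, Walk.mem_support_append_iff] at hxp
  rcases hxp with hx' | hx'
  · exact hG.dist_add_dist_of_mem_support (hp.takeUntil hyp) hx'
  · have := hG.dist_add_dist_of_mem_support (hp.dropUntil hyp) hx'
    have := G.dist_comm (u := x) (v := y)
    omega

lemma isConvex_of_preconnected (hG : G.IsTree) (hs : (G.induce s).Preconnected) :
    G.IsConvex s := by
  classical
  intro x hx y hy z hz
  obtain ⟨q⟩ := hs ⟨x, hx⟩ ⟨y, hy⟩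
  have hp := hG.mem_support_of_dist_add_dist (q.map (Embedding.induce s).toHom).bypass_isPath hz
  obtain ⟨t, -, rfl⟩ :=
    List.mem_map.mp (Walk.support_map _ q ▸ Walk.support_bypass_subset_support _ hp)
  exact t.2

lemma dist_eq_add_of_isProjection (hG : G.IsTree) (hL : G.IsConvex L)
    (hy : G.IsProjection L w y) (hz : z ∈ L) : G.dist w z = G.dist w y + G.dist y z := by
  refine (hG.dist_add_dist_of_forall_eq fun x hwx hxz => ?_).symm
  have := hy.2 x (hL hy.1 hz hxz)
  exact hG.connected.dist_eq_zero_iff.mp (by omega)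

lemma dist_add_dist_of_isProjection_of_ne (hG : G.IsTree) (hL : G.IsConvex L)
    (hy : G.IsProjection L w y) (hy' : G.IsProjection L w' y') (hne : y ≠ y') :
    G.dist w y + G.dist y w' = G.dist w w' := by
  refine hG.dist_add_dist_of_forall_eq fun x hwx hxw' => ?_
  have hw'y := hG.dist_eq_add_of_isProjection hL hy' hy.1
  have hwy' := hG.dist_eq_add_of_isProjection hL hy hy'.1
  have htri := hG.connected.dist_triangle (u := w) (v := x) (w := y')
  have c₁ := G.dist_comm (u := x) (v := y)
  have c₂ := G.dist_comm (u := x) (v := y')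
  have c₃ := G.dist_comm (u := w') (v := y)
  have c₄ := G.dist_comm (u := w') (v := y')
  have c₅ := G.dist_comm (u := y') (v := y)
  -- Either `x ∈ [y, y'] ⊆ L`, so `x = y` by minimality of `y`, or `y' ∈ [y, x]`, and then both
  -- `y` and `y'` would be the nearest point of `x` in `L`.
  rcases le_total (G.dist y x) (G.dist y y') with hle | hle
  · have hxy' := hG.dist_add_dist_of_le hxw' (by omega) hle
    have := hy.2 x (hL hy.1 hy'.1 hxy')
    exact hG.connected.dist_eq_zero_iff.mp (by omega)
  · have hy'x := hG.dist_add_dist_of_le (by omega) hxw' hle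
    exact absurd (hG.connected.dist_eq_zero_iff.mp (by omega)) hne

lemma dist_apply_of_isProjection (hG : G.IsTree) (φ : G ≃g G) (hL : G.IsConvex L)
    (hφ : MapsTo φ L L) (hφ' : MapsTo φ.symm L L) (hy : G.IsProjection L w y) (hfix : φ y ≠ y) :
    G.dist w y + G.dist y (φ w) = G.dist w (φ w) ∧
      G.dist w (φ w) = 2 * G.dist w y + G.dist y (φ y) := by
  have hφy := hy.map φ hφ hφ'
  have h₁ := hG.dist_add_dist_of_isProjection_of_ne hL hy hφy hfix.symm
  have h₂ := hG.dist_eq_add_of_isProjection hL hφy hy.1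
  have h₃ := φ.dist_apply w y
  have c₁ := G.dist_comm (u := φ w) (v := y)
  have c₂ := G.dist_comm (u := φ y) (v := y)
  omega

lemma setOf_dist_apply_eq_subset (hG : G.IsTree) (φ : G ≃g G) (hL : G.IsConvex L)
    (hne : L.Nonempty) (hφ : MapsTo φ L L) (hφ' : MapsTo φ.symm L L)
    (hLm : ∀ x ∈ L, G.dist x (φ x) = m) (hm : m ≠ 0) : {v | G.dist v (φ v) = m} ⊆ L := by
  intro w (hw : G.dist w (φ w) = m)
  obtain ⟨y, hy⟩ := exists_isProjection hne w
  have hym := hLm y hy.1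
  have hfix : φ y ≠ y := fun h => hm (by rw [← hym, h, dist_self])
  have := (hG.dist_apply_of_isProjection φ hL hφ hφ' hy hfix).2
  obtain rfl : w = y := hG.connected.dist_eq_zero_iff.mp (by omega)
  exact hy.1

end IsTree

end SimpleGraph

open SimpleGraph Set

/-- Tits' classification of hyperbolic tree automorphisms: if a group `G` acts on a
tree `T` and `a ∈ G` fixes no vertex, then the set `S` of vertices minimizing
`d(v, a·v)` is the vertex set of an `⟨a⟩`-invariant subtree on which `a` translates
with amplitude `m = min_v d(v, a·v)`, and `S` is contained in every `⟨a⟩`-invariant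
subtree (so it is the unique minimal one). -/
theorem hyperbolic_axis {V : Type u} (T : SimpleGraph V) (hT : T.IsTree)
    {G : Type v} [Group G] [MulAction G V]
    (hact : ∀ (g : G) (u v : V), T.Adj u v ↔ T.Adj (g • u) (g • v))
    (a : G) (ha : ∀ v : V, a • v ≠ v)
    (m : ℕ) (hm : IsLeast {d : ℕ | ∃ v : V, T.dist v (a • v) = d} m) :
    (({v : V | T.dist v (a • v) = m} : Set V).Nonempty ∧
      (T.induce {v : V | T.dist v (a • v) = m}).Connected ∧
      (∀ v ∈ {v : V | T.dist v (a • v) = m}, a • v ∈ {v : V | T.dist v (a • v) = m}) ∧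
      (∀ v ∈ {v : V | T.dist v (a • v) = m}, a⁻¹ • v ∈ {v : V | T.dist v (a • v) = m})) ∧
    ∀ S' : Set V, S'.Nonempty → (T.induce S').Connected →
      (∀ v ∈ S', a • v ∈ S') → (∀ v ∈ S', a⁻¹ • v ∈ S') →
      {v : V | T.dist v (a • v) = m} ⊆ S' := by
  let φ : T ≃g T := ⟨MulAction.toPerm a, (hact a _ _).symm⟩
  set S := {v : V | T.dist v (φ v) = m}
  obtain ⟨v₀, hv₀ : v₀ ∈ S⟩ := hm.1
  have hm0 : m ≠ 0 := fun h => ha v₀ (hT.connected.dist_eq_zero_iff.mp (hv₀.trans h)).symm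
  have hφS : MapsTo φ S S := fun v (hv : _ = m) => (φ.dist_apply _ _).trans hv
  have hφS' : MapsTo φ.symm S S := fun v (hv : _ = m) => by
    change T.dist (φ.symm v) (φ (φ.symm v)) = m
    rwa [φ.apply_symm_apply, ← φ.dist_apply, φ.apply_symm_apply]
  obtain ⟨p, hp⟩ := hT.connected.exists_walk_length_eq_dist v₀ (φ v₀)
  have hpS : ∀ z ∈ p.support, z ∈ S := fun z hz => le_antisymm
    (hv₀ ▸ dist_apply_le_of_dist_add_dist hT.connected φ
      (p.dist_add_dist_of_length_eq_dist hp hz))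
    (hm.2 ⟨z, rfl⟩)
  obtain ⟨C, hCS, hv₀C, hC, hφC, hφC'⟩ := exists_connected_subset_mapsTo φ hφS hφS' p hpS
  have hSC : S ⊆ C := hT.setOf_dist_apply_eq_subset φ
    (hT.isConvex_of_preconnected hC.preconnected) ⟨v₀, hv₀C⟩ hφC hφC' (fun x hx => hCS hx) hm0
  have hS : (T.induce S).Connected := (hSC.antisymm hCS) ▸ hC
  refine ⟨⟨⟨v₀, hv₀⟩, hS, fun v hv => hφS hv, fun v hv => hφS' hv⟩,
    fun S' ⟨w, hw⟩ hS' hφS'₁ hφS'₂ => ?_⟩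
  have hSconv := hT.isConvex_of_preconnected hS.preconnected
  have hS'conv := hT.isConvex_of_preconnected hS'.preconnected
  obtain ⟨y, hy⟩ := exists_isProjection (G := T) ⟨v₀, hv₀⟩ w
  have hyS' : y ∈ S' := hS'conv hw (hφS'₁ w hw)
    (hT.dist_apply_of_isProjection φ hSconv hφS hφS' hy (ha y)).1
  refine (hT.setOf_dist_apply_eq_subset φ (hSconv.inter hS'conv) ⟨y, hy.1, hyS'⟩
    (hφS.inter_inter fun v hv => hφS'₁ v hv) (hφS'.inter_inter fun v hv => hφS'₂ v hv)
    (fun x hx => hx.1) hm0).trans inter_subset_right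
end
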